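/- arXiv:2208.02468 — 4 statements merged into one kernel-verified Lean document; each statement's English description precedes it below -/
import Mathlib

section
/- Let G be a finite group, σ ∈ G an element of order three, and ℓ ≥ 1. Then the following are equivalent: (1) there exist elements g₀,…,g_ℓ ∈ G and positive integers e₁,…,e_ℓ such that the function F(x) = g₀ x^{e₁} g₁ x^{e₂} ⋯ g_{ℓ-1} x^{e_ℓ} g_ℓ satisfies F(1) = 1 and F(σ) = F(σ²) = σ; (2) there exist elements τ₁,…,τ_ℓ ∈ G, each conjugate to σ in G, and positive integers e₁,…,e_ℓ, such that τ₁^{e₁} ⋯ τ_ℓ^{e_ℓ} = σ and τ₁^{2e₁} ⋯ τ_ℓ^{2e_ℓ} = σ. -/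
private lemma conj_pow' {G : Type*} [Group G] (c s : G) (n : ℕ) :
    (c * s * c⁻¹) ^ n = c * s ^ n * c⁻¹ := by
  induction n with
  | zero => simp
  | succ n ih => rw [pow_succ, pow_succ, ih]; group

private lemma expand_lemma {G : Type*} [Group G] :
    ∀ (ℓ : ℕ) (g : Fin (ℓ + 1) → G), ∃ c : Fin ℓ → G,
      ∀ (e : Fin ℓ → ℕ) (x : G),
        g 0 * (List.ofFn fun i : Fin ℓ => x ^ e i * g i.succ).prod =
          (List.ofFn fun i : Fin ℓ => c i * x ^ e i * (c i)⁻¹).prod *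
            (g 0 * (List.ofFn fun i : Fin ℓ => g i.succ).prod) := by
  intro ℓ
  induction ℓ with
  | zero => exact fun g => ⟨fun i => i.elim0, by simp⟩
  | succ ℓ ih =>
    intro g
    obtain ⟨c', hc'⟩ := ih (Fin.cons (g 0 * g 1) (fun j => g j.succ.succ))
    refine ⟨Fin.cons (g 0) c', fun e x => ?_⟩
    have h := hc' (fun i => e i.succ) x
    simp only [Fin.cons_zero, Fin.cons_succ] at h
    simp only [List.ofFn_succ, Fin.cons_zero, Fin.cons_succ, List.prod_cons,
      Fin.succ_zero_eq_one]
    calc g 0 * (x ^ e 0 * g 1 * (List.ofFn fun i : Fin ℓ => x ^ e i.succ * g i.succ.succ).prod)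
        = (g 0 * x ^ e 0 * (g 0)⁻¹) *
          (g 0 * g 1 * (List.ofFn fun i : Fin ℓ => x ^ e i.succ * g i.succ.succ).prod) := by
            group
      _ = (g 0 * x ^ e 0 * (g 0)⁻¹) *
          ((List.ofFn fun i : Fin ℓ => c' i * x ^ e i.succ * (c' i)⁻¹).prod *
            (g 0 * g 1 * (List.ofFn fun i : Fin ℓ => g i.succ.succ).prod)) := by
            rw [h]
      _ = g 0 * x ^ e 0 * (g 0)⁻¹ *
            (List.ofFn fun i : Fin ℓ => c' i * x ^ e i.succ * (c' i)⁻¹).prod *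
            (g 0 * (g 1 * (List.ofFn fun i : Fin ℓ => g i.succ.succ).prod)) := by
            group

private lemma collapse_lemma {G : Type*} [Group G] :
    ∀ (ℓ : ℕ) (h : Fin ℓ → G), ∃ g : Fin (ℓ + 1) → G,
      ∀ (e : Fin ℓ → ℕ) (x : G),
        g 0 * (List.ofFn fun i : Fin ℓ => x ^ e i * g i.succ).prod =
          (List.ofFn fun i : Fin ℓ => h i * x ^ e i * (h i)⁻¹).prod := by
  intro ℓ
  induction ℓ with
  | zero => exact fun h => ⟨fun _ => 1, by simp⟩
  | succ ℓ ih =>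
    intro h
    obtain ⟨g', hg'⟩ := ih (fun j => h j.succ)
    refine ⟨Fin.cons (h 0) (Fin.cons ((h 0)⁻¹ * g' 0) (fun j => g' j.succ)), fun e x => ?_⟩
    have h' := hg' (fun j => e j.succ) x
    simp only [List.ofFn_succ, Fin.cons_zero, Fin.cons_succ, List.prod_cons,
      Fin.succ_zero_eq_one] at h' ⊢
    calc h 0 * (x ^ e 0 * ((h 0)⁻¹ * g' 0) *
            (List.ofFn fun j : Fin ℓ => x ^ e j.succ * g' j.succ).prod)
        = (h 0 * x ^ e 0 * (h 0)⁻¹) *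
            (g' 0 * (List.ofFn fun j : Fin ℓ => x ^ e j.succ * g' j.succ).prod) := by group
      _ = h 0 * x ^ e 0 * (h 0)⁻¹ *
            (List.ofFn fun j : Fin ℓ => h j.succ * x ^ e j.succ * (h j.succ)⁻¹).prod := by
            rw [h']


/-- Equivalence between existence of a compression group function of size ℓ
and existence of conjugate-element data. -/
theorem stmt_0 (G : Type*) [Group G] [Finite G] (σ : G) (hσ : orderOf σ = 3)
    (ℓ : ℕ) (hℓ : 1 ≤ ℓ) :
    (∃ (g : Fin (ℓ + 1) → G) (e : Fin ℓ → ℕ), (∀ i, 1 ≤ e i) ∧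
      (∀ F : G → G,
        (F = fun x => g 0 * (List.ofFn (fun i : Fin ℓ => x ^ e i * g i.succ)).prod) →
          F 1 = 1 ∧ F σ = σ ∧ F (σ ^ 2) = σ)) ↔
    (∃ (τ : Fin ℓ → G) (e : Fin ℓ → ℕ), (∀ i, 1 ≤ e i) ∧ (∀ i, IsConj σ (τ i)) ∧
      (List.ofFn (fun i : Fin ℓ => τ i ^ e i)).prod = σ ∧
      (List.ofFn (fun i : Fin ℓ => τ i ^ (2 * e i))).prod = σ) := by
  constructor
  · rintro ⟨g, e, he, hF⟩
    obtain ⟨h1, hs1, hs2⟩ := hF _ rfl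
    obtain ⟨c, hc⟩ := expand_lemma ℓ g
    have h1' : g 0 * (List.ofFn fun i : Fin ℓ => (1 : G) ^ e i * g i.succ).prod = 1 := h1
    have hP : g 0 * (List.ofFn fun i : Fin ℓ => g i.succ).prod = 1 := by
      simpa using h1'
    have hs1' : g 0 * (List.ofFn fun i : Fin ℓ => σ ^ e i * g i.succ).prod = σ := hs1
    have hs2' : g 0 * (List.ofFn fun i : Fin ℓ => (σ ^ 2) ^ e i * g i.succ).prod = σ := hs2
    refine ⟨fun i => c i * σ * (c i)⁻¹, e, he,
      fun i => isConj_iff.mpr ⟨c i, rfl⟩, ?_, ?_⟩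
    · have h := hc e σ
      rw [hP, mul_one] at h
      calc (List.ofFn fun i : Fin ℓ => (c i * σ * (c i)⁻¹) ^ e i).prod
          = (List.ofFn fun i : Fin ℓ => c i * σ ^ e i * (c i)⁻¹).prod := by
            simp only [conj_pow']
        _ = σ := by rw [← h]; exact hs1'
    · have h := hc e (σ ^ 2)
      rw [hP, mul_one] at h
      calc (List.ofFn fun i : Fin ℓ => (c i * σ * (c i)⁻¹) ^ (2 * e i)).prod
          = (List.ofFn fun i : Fin ℓ => c i * (σ ^ 2) ^ e i * (c i)⁻¹).prod := by
            simp only [conj_pow', pow_mul]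
        _ = σ := by rw [← h]; exact hs2'
  · rintro ⟨τ, e, he, hconj, h1, h2⟩
    choose hh hhspec using fun i => isConj_iff.mp (hconj i)
    obtain ⟨g, hg⟩ := collapse_lemma ℓ hh
    refine ⟨g, e, he, fun F hFdef => ?_⟩
    subst hFdef
    simp only [← hhspec, conj_pow'] at h1 h2
    simp only [pow_mul] at h2
    refine ⟨?_, ?_, ?_⟩
    · have := hg e 1
      simpa using this
    · show g 0 * (List.ofFn fun i : Fin ℓ => σ ^ e i * g i.succ).prod = σ
      rw [hg e σ]; exact h1
    · show g 0 * (List.ofFn fun i : Fin ℓ => (σ ^ 2) ^ e i * g i.succ).prod = σ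
      rw [hg e (σ ^ 2)]; exact h2
end

section
/- In the symmetric group S₄, for no element σ of order three do there exist conjugates τ₁,…,τ_ℓ of σ and positive integers e₁,…,e_ℓ with τ₁^{e₁}⋯τ_ℓ^{e_ℓ} = σ = τ₁^{2e₁}⋯τ_ℓ^{2e_ℓ}. -/
/-!
Every conjugate of an element `σ` of order three is even, so all the data live in `A₄`. Any
homomorphism `φ` from `A₄` to an abelian group sends `τ₁^{2e₁}⋯τ_ℓ^{2e_ℓ}` to the square of the
image of `τ₁^{e₁}⋯τ_ℓ^{e_ℓ}`, so `φ σ = (φ σ)²` forces `φ σ = 1`. Hence `σ` lies in the commutator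
subgroup of `A₄`, which is the Klein four-group, of exponent two; but `σ` has order three.
-/

open Equiv Equiv.Perm

theorem MonoidHom.map_prod_pow_eq_one_of_prod_pow_eq_prod_pow_two_mul {G A : Type*} [Monoid G]
    [CommGroup A] (φ : G →* A) {ℓ : ℕ} (τ : Fin ℓ → G) (e : Fin ℓ → ℕ)
    (h : (List.ofFn fun i => τ i ^ e i).prod = (List.ofFn fun i => τ i ^ (2 * e i)).prod) :
    φ (List.ofFn fun i => τ i ^ e i).prod = 1 := by
  have hmap : ∀ f : Fin ℓ → ℕ,
      φ (List.ofFn fun i => τ i ^ f i).prod = ∏ i, φ (τ i) ^ f i := by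
    intro f
    simp only [map_list_prod, List.map_ofFn, Function.comp_def, map_pow, List.prod_ofFn]
  have hsq : φ (List.ofFn fun i => τ i ^ e i).prod =
      φ (List.ofFn fun i => τ i ^ e i).prod * φ (List.ofFn fun i => τ i ^ e i).prod := by
    conv_lhs => rw [h]
    rw [hmap, hmap, ← Finset.prod_mul_distrib]
    simp only [two_mul, pow_add]
  exact left_eq_mul.mp hsq

theorem Subgroup.prod_pow_mem_map_commutator_of_prod_pow_eq_prod_pow_two_mul {G : Type*}
    [Group G] (H : Subgroup G) {ℓ : ℕ} (τ : Fin ℓ → G) (e : Fin ℓ → ℕ) (hτ : ∀ i, τ i ∈ H)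
    (h : (List.ofFn fun i => τ i ^ e i).prod = (List.ofFn fun i => τ i ^ (2 * e i)).prod) :
    (List.ofFn fun i => τ i ^ e i).prod ∈ (_root_.commutator H).map H.subtype := by
  let τH : Fin ℓ → H := fun i => ⟨τ i, hτ i⟩
  have hcoe : ∀ f : Fin ℓ → ℕ,
      H.subtype (List.ofFn fun i => τH i ^ f i).prod = (List.ofFn fun i => τ i ^ f i).prod := by
    intro f
    simp [τH, map_list_prod, List.map_ofFn, Function.comp_def]
  refine ⟨_, ?_, hcoe e⟩
  rw [SetLike.mem_coe, ← Abelianization.ker_of, MonoidHom.mem_ker]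
  refine Abelianization.of.map_prod_pow_eq_one_of_prod_pow_eq_prod_pow_two_mul τH e ?_
  exact H.subtype_injective (by rw [hcoe, hcoe, h])

theorem Equiv.Perm.mem_alternatingGroup_of_odd_orderOf {α : Type*} [Fintype α] [DecidableEq α]
    {σ : Perm α} (hσ : Odd (orderOf σ)) : σ ∈ alternatingGroup α := by
  have h := congrArg sign (pow_orderOf_eq_one σ)
  rwa [map_pow, map_one, Int.units_pow_eq_pow_mod_two, Nat.odd_iff.mp hσ, pow_one] at h

theorem alternatingGroup.sq_eq_one_of_mem_map_commutator {α : Type*} [Fintype α] [DecidableEq α]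
    (hα : Nat.card α = 4) {g : Perm α}
    (hg : g ∈ (commutator (alternatingGroup α)).map (alternatingGroup α).subtype) : g ^ 2 = 1 := by
  obtain ⟨k, hk, rfl⟩ := hg
  rw [← kleinFour_eq_commutator hα] at hk
  have h := Monoid.pow_exponent_eq_one (⟨k, hk⟩ : kleinFour α)
  rw [exponent_kleinFour_of_card_eq_four hα] at h
  simpa using congrArg (fun x : kleinFour α => ((x : alternatingGroup α) : Perm α)) h

/-- No compression data exist over S₄. -/
theorem stmt_12 :
    ∀ σ : Equiv.Perm (Fin 4), orderOf σ = 3 →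
      ¬ ∃ (ℓ : ℕ) (τ : Fin ℓ → Equiv.Perm (Fin 4)) (e : Fin ℓ → ℕ), (∀ i, 1 ≤ e i) ∧
        (∀ i, IsConj σ (τ i)) ∧
        (List.ofFn (fun i : Fin ℓ => τ i ^ e i)).prod = σ ∧
        (List.ofFn (fun i : Fin ℓ => τ i ^ (2 * e i))).prod = σ := by
  rintro σ hσ ⟨ℓ, τ, e, -, hconj, h₁, h₂⟩
  have hσA : σ ∈ alternatingGroup (Fin 4) :=
    mem_alternatingGroup_of_odd_orderOf (by rw [hσ]; decide)
  have hτA : ∀ i, τ i ∈ alternatingGroup (Fin 4) := fun i =>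
    (isConj_iff_eq.mp (sign.map_isConj (hconj i))).symm.trans hσA
  have hσV := h₁ ▸
    (alternatingGroup (Fin 4)).prod_pow_mem_map_commutator_of_prod_pow_eq_prod_pow_two_mul
      τ e hτA (h₁.trans h₂.symm)
  have h32 : 3 ∣ 2 :=
    hσ ▸ orderOf_dvd_of_pow_eq_one (alternatingGroup.sq_eq_one_of_mem_map_commutator (by simp) hσV)
  exact absurd h32 (by decide)
end

section
/- In the symmetric group S₅, fix an element σ of order three. There do not exist elements τ₁, τ₂, τ₃ ∈ S₅, each conjugate to σ, and exponents e₁, e₂, e₃ ∈ {1,2}, such that τ₁^{e₁} τ₂^{e₂} τ₃^{e₃} = σ and τ₁^{2e₁} τ₂^{2e₂} τ₃^{2e₃} = σ. -/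
private def cc : Equiv.Perm (Fin 5) := Equiv.swap 0 1 * Equiv.swap 0 2

private lemma cc_cycleType : cc.cycleType = {3} :=
  Equiv.Perm.isThreeCycle_swap_mul_swap_same (by decide) (by decide) (by decide)

private lemma cycleType_of_orderOf_three {σ : Equiv.Perm (Fin 5)} (h : orderOf σ = 3) :
    σ.cycleType = {3} := by
  have h3 : ∀ n ∈ σ.cycleType, n = 3 := by
    intro n hn
    have hd : n ∣ 3 := by
      rw [← h, ← σ.lcm_cycleType]; exact Multiset.dvd_lcm hn
    have h2 := Equiv.Perm.two_le_of_mem_cycleType hn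
    rcases (Nat.dvd_prime Nat.prime_three).mp hd with rfl | rfl
    · omega
    · rfl
  have hrep := Multiset.eq_replicate_of_mem h3
  have hsum := σ.sum_cycleType
  have hle : σ.support.card ≤ 5 := by
    simpa using Finset.card_le_card (Finset.subset_univ σ.support)
  have hne : σ ≠ 1 := by
    intro h1; rw [h1, orderOf_one] at h; omega
  have hpos : 0 < Multiset.card σ.cycleType :=
    Equiv.Perm.card_cycleType_pos.mpr hne
  rw [hrep, Multiset.sum_replicate, smul_eq_mul] at hsum
  have hcard : Multiset.card σ.cycleType = 1 := by omega
  rw [hrep, hcard, Multiset.replicate_one]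

set_option maxHeartbeats 40000000 in
set_option maxRecDepth 100000 in
private lemma key : ∀ b₂ b₃ : Equiv.Perm (Fin 5), b₂ ^ 3 = 1 → b₃ ^ 3 = 1 →
    b₂ * b₃ * cc⁻¹ * b₂⁻¹ * b₃⁻¹ = cc → (cc * b₃⁻¹ * b₂⁻¹) ^ 3 ≠ 1 := by decide

/-- Size-three nonexistence over S₅. -/
theorem stmt_13 (σ : Equiv.Perm (Fin 5)) (hσ : orderOf σ = 3) :
    ¬ ∃ (τ₁ τ₂ τ₃ : Equiv.Perm (Fin 5)) (e₁ e₂ e₃ : ℕ),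
      e₁ ∈ ({1, 2} : Set ℕ) ∧ e₂ ∈ ({1, 2} : Set ℕ) ∧ e₃ ∈ ({1, 2} : Set ℕ) ∧
      IsConj σ τ₁ ∧ IsConj σ τ₂ ∧ IsConj σ τ₃ ∧
      τ₁ ^ e₁ * τ₂ ^ e₂ * τ₃ ^ e₃ = σ ∧
      τ₁ ^ (2 * e₁) * τ₂ ^ (2 * e₂) * τ₃ ^ (2 * e₃) = σ := by
  rintro ⟨τ₁, τ₂, τ₃, e₁, e₂, e₃, -, -, -, h1, h2, h3, hp, hq⟩
  have hσ3 : σ ^ 3 = 1 := by rw [← hσ]; exact pow_orderOf_eq_one σ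
  have hτ3 : ∀ τ : Equiv.Perm (Fin 5), IsConj σ τ → τ ^ 3 = 1 := by
    intro τ hτ
    obtain ⟨g, hg⟩ := isConj_iff.mp hτ
    rw [← hg, conj_pow, hσ3, mul_one, mul_inv_cancel]
  have hb3 : ∀ (τ : Equiv.Perm (Fin 5)) (e : ℕ), IsConj σ τ → (τ ^ e) ^ 3 = 1 := by
    intro τ e hτ
    rw [← pow_mul, mul_comm, pow_mul, hτ3 τ hτ, one_pow]
  -- conjugate everything so that σ becomes cc
  have hconj : IsConj cc σ :=
    Equiv.Perm.isConj_iff_cycleType_eq.mpr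
      (by rw [cc_cycleType, cycleType_of_orderOf_three hσ])
  obtain ⟨g, hg⟩ := isConj_iff.mp hconj
  set b₁ : Equiv.Perm (Fin 5) := g⁻¹ * τ₁ ^ e₁ * g with hb₁
  set b₂ : Equiv.Perm (Fin 5) := g⁻¹ * τ₂ ^ e₂ * g with hb₂
  set b₃ : Equiv.Perm (Fin 5) := g⁻¹ * τ₃ ^ e₃ * g with hb₃
  have k₁ : b₁ ^ 3 = 1 := by
    rw [hb₁, show g⁻¹ * τ₁ ^ e₁ * g = g⁻¹ * τ₁ ^ e₁ * g⁻¹⁻¹ by rw [inv_inv],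
      conj_pow, hb3 τ₁ e₁ h1, mul_one, mul_inv_cancel]
  have k₂ : b₂ ^ 3 = 1 := by
    rw [hb₂, show g⁻¹ * τ₂ ^ e₂ * g = g⁻¹ * τ₂ ^ e₂ * g⁻¹⁻¹ by rw [inv_inv],
      conj_pow, hb3 τ₂ e₂ h2, mul_one, mul_inv_cancel]
  have k₃ : b₃ ^ 3 = 1 := by
    rw [hb₃, show g⁻¹ * τ₃ ^ e₃ * g = g⁻¹ * τ₃ ^ e₃ * g⁻¹⁻¹ by rw [inv_inv],
      conj_pow, hb3 τ₃ e₃ h3, mul_one, mul_inv_cancel]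
  -- product equations
  have hP : b₁ * b₂ * b₃ = cc := by
    have : g⁻¹ * (τ₁ ^ e₁ * τ₂ ^ e₂ * τ₃ ^ e₃) * g = g⁻¹ * σ * g := by rw [hp]
    rw [← hg] at this
    rw [hb₁, hb₂, hb₃]
    calc g⁻¹ * τ₁ ^ e₁ * g * (g⁻¹ * τ₂ ^ e₂ * g) * (g⁻¹ * τ₃ ^ e₃ * g)
        = g⁻¹ * (τ₁ ^ e₁ * τ₂ ^ e₂ * τ₃ ^ e₃) * g := by group
      _ = g⁻¹ * (g * cc * g⁻¹) * g := this
      _ = cc := by group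
  -- squares are inverses
  have hsq : ∀ b : Equiv.Perm (Fin 5), b ^ 3 = 1 → b ^ 2 = b⁻¹ := by
    intro b hb
    have : b ^ 2 * b = b⁻¹ * b := by
      rw [inv_mul_cancel, ← pow_succ]; exact hb
    exact mul_right_cancel this
  have hQ : b₁⁻¹ * b₂⁻¹ * b₃⁻¹ = cc := by
    have hq' : (τ₁ ^ e₁)⁻¹ * (τ₂ ^ e₂)⁻¹ * (τ₃ ^ e₃)⁻¹ = σ := by
      rw [← hsq _ (hb3 τ₁ e₁ h1), ← hsq _ (hb3 τ₂ e₂ h2), ← hsq _ (hb3 τ₃ e₃ h3),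
        ← pow_mul' τ₁, ← pow_mul' τ₂, ← pow_mul' τ₃]
      exact hq
    have : g⁻¹ * ((τ₁ ^ e₁)⁻¹ * (τ₂ ^ e₂)⁻¹ * (τ₃ ^ e₃)⁻¹) * g = g⁻¹ * σ * g := by
      rw [hq']
    rw [← hg] at this
    rw [hb₁, hb₂, hb₃]
    calc (g⁻¹ * τ₁ ^ e₁ * g)⁻¹ * (g⁻¹ * τ₂ ^ e₂ * g)⁻¹ * (g⁻¹ * τ₃ ^ e₃ * g)⁻¹
        = g⁻¹ * ((τ₁ ^ e₁)⁻¹ * (τ₂ ^ e₂)⁻¹ * (τ₃ ^ e₃)⁻¹) * g := by group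
      _ = g⁻¹ * (g * cc * g⁻¹) * g := this
      _ = cc := by group
  -- express b₁ and derive key hypotheses
  have hb1 : b₁ = cc * b₃⁻¹ * b₂⁻¹ := by
    rw [← hP]; group
  have K3 : b₂ * b₃ * cc⁻¹ * b₂⁻¹ * b₃⁻¹ = cc := by
    calc b₂ * b₃ * cc⁻¹ * b₂⁻¹ * b₃⁻¹ = b₁⁻¹ * b₂⁻¹ * b₃⁻¹ := by rw [hb1]; group
      _ = cc := hQ
  have K4 : (cc * b₃⁻¹ * b₂⁻¹) ^ 3 = 1 := by rw [← hb1]; exact k₁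
  exact key b₂ b₃ k₂ k₃ K3 K4
end

section
/- Define F : Perm(Fin 5) → Perm(Fin 5) by F(x) = (1 2 4 3 5) · x · (1 3 5) · x · (1 4 3) · x · (1 5)(2 3) · x · (1 4 3 5 2). Then with σ = (1 2 3), we have F(1) = 1, F(σ) = σ, and F(σ²) = σ, and every constant permutation appearing in F is even. -/
/-- The 3-cycle (a b c): a ↦ b ↦ c ↦ a. -/
def cyc3' (a b c : Fin 5) : Equiv.Perm (Fin 5) := Equiv.swap a c * Equiv.swap a b

/-- The 5-cycle (a b c d e): a ↦ b ↦ c ↦ d ↦ e ↦ a. -/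
def cyc5' (a b c d e : Fin 5) : Equiv.Perm (Fin 5) :=
  Equiv.swap a e * Equiv.swap a d * Equiv.swap a c * Equiv.swap a b

set_option maxRecDepth 10000 in
/-- The group function
F(x) = (1 2 4 3 5)·x·(1 3 5)·x·(1 4 3)·x·(1 5)(2 3)·x·(1 4 3 5 2)
(labels 1..5 rendered as 0..4 in `Fin 5`) satisfies F(1) = 1, F(σ) = σ and
F(σ²) = σ for σ = (1 2 3), and all its constants are even permutations. -/
theorem stmt_16 :
    let g₀ : Equiv.Perm (Fin 5) := cyc5' 0 1 3 2 4
    let g₁ : Equiv.Perm (Fin 5) := cyc3' 0 2 4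
    let g₂ : Equiv.Perm (Fin 5) := cyc3' 0 3 2
    let g₃ : Equiv.Perm (Fin 5) := Equiv.swap 0 4 * Equiv.swap 1 2
    let g₄ : Equiv.Perm (Fin 5) := cyc5' 0 3 2 4 1
    let F : Equiv.Perm (Fin 5) → Equiv.Perm (Fin 5) :=
      fun x => g₀ * x * g₁ * x * g₂ * x * g₃ * x * g₄
    let σ : Equiv.Perm (Fin 5) := cyc3' 0 1 2
    F 1 = 1 ∧ F σ = σ ∧ F (σ ^ 2) = σ ∧
    ∀ g ∈ ({g₀, g₁, g₂, g₃, g₄} : Set (Equiv.Perm (Fin 5))),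
      g ∈ alternatingGroup (Fin 5) := by
  refine ⟨?_, ?_, ?_, ?_⟩ <;> simp only [Set.mem_insert_iff, Set.mem_singleton_iff, Equiv.Perm.mem_alternatingGroup] <;> decide
end
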